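/- Let L be a regular-epi localization functor on XMod such that for every crossed module M the kernel ker(ℓ^M : M → LM) is L-acyclic (i.e. L applied to it is the trivial crossed module). Then L is admissible for the class of regular epimorphisms. -/

import Mathlib

set_option linter.unusedVariables false

/-- A crossed module of groups `(M, G, d)` with `G` acting on `M`. -/
structure XMod : Type 1 where
  M : Type
  G : Type
  [grpM : Group M]
  [grpG : Group G]
  act : G →* MulAut M
  d : M →* G
  act_d : ∀ (b : G) (t : M), d (act b t) = b * d t * b⁻¹
  peiffer : ∀ (t s : M), act (d t) s = t * s * t⁻¹

attribute [instance] XMod.grpM XMod.grpG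

/-- A morphism of crossed modules. -/
structure XModHom (N T : XMod) where
  f1 : N.M →* T.M
  f2 : N.G →* T.G
  comm_d : ∀ n, T.d (f1 n) = f2 (N.d n)
  equiv : ∀ (b : N.G) (n : N.M), f1 (N.act b n) = T.act (f2 b) (f1 n)

namespace XModHom

theorem ext {N T : XMod} {f g : XModHom N T} (h1 : f.f1 = g.f1) (h2 : f.f2 = g.f2) :
    f = g := by
  cases f; cases g; cases h1; cases h2; rfl

/-- The identity morphism. -/
def id (T : XMod) : XModHom T T :=
  ⟨MonoidHom.id _, MonoidHom.id _, fun _ => rfl, fun _ _ => rfl⟩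

/-- Composition of morphisms of crossed modules. -/
def comp {A B C : XMod} (g : XModHom B C) (f : XModHom A B) : XModHom A C where
  f1 := g.f1.comp f.f1
  f2 := g.f2.comp f.f2
  comm_d := by intro n; simp [MonoidHom.comp_apply, g.comm_d, f.comm_d]
  equiv := by intro b n; simp [MonoidHom.comp_apply, f.equiv, g.equiv]

/-- The trivial morphism of crossed modules. -/
def triv (A B : XMod) : XModHom A B where
  f1 := 1
  f2 := 1
  comm_d := by intro n; simp
  equiv := by intro b n; simp

/-- A morphism of crossed modules is an isomorphism if it has a two-sided inverse. -/
def IsIso {A B : XMod} (f : XModHom A B) : Prop :=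
  ∃ g : XModHom B A, comp g f = id A ∧ comp f g = id B

/-- Regular epimorphisms of crossed modules are exactly the componentwise
surjective morphisms. -/
def RegEpi {A B : XMod} (f : XModHom A B) : Prop :=
  Function.Surjective f.f1 ∧ Function.Surjective f.f2

/-- `κ` is a kernel of `α` (in the categorical sense). -/
def IsKernelOf {N T Q : XMod} (κ : XModHom N T) (α : XModHom T Q) : Prop :=
  comp α κ = triv N Q ∧
    ∀ (X : XMod) (u : XModHom X T), comp α u = triv X Q →
      ∃! v : XModHom X N, comp κ v = u

end XModHom

/-- `1 → N → T → Q → 1` is a short exact sequence of crossed modules. -/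
def ShortExact {N T Q : XMod} (κ : XModHom N T) (α : XModHom T Q) : Prop :=
  XModHom.IsKernelOf κ α ∧ XModHom.RegEpi α
/-- A localization functor (coaugmented idempotent functor) on `XMod`. -/
structure LocalizationFunctor where
  obj : XMod → XMod
  map : ∀ {A B : XMod}, XModHom A B → XModHom (obj A) (obj B)
  map_id : ∀ A : XMod, map (XModHom.id A) = XModHom.id (obj A)
  map_comp : ∀ {A B C : XMod} (f : XModHom A B) (g : XModHom B C),
    map (XModHom.comp g f) = XModHom.comp (map g) (map f)
  ell : ∀ A : XMod, XModHom A (obj A)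
  natural : ∀ {A B : XMod} (f : XModHom A B),
    XModHom.comp (ell B) f = XModHom.comp (map f) (ell A)
  iso_ell_obj : ∀ A : XMod, XModHom.IsIso (ell (obj A))
  iso_map_ell : ∀ A : XMod, XModHom.IsIso (map (ell A))

namespace LocalizationFunctor

/-- A crossed module is `L`-local if its coaugmentation is an isomorphism. -/
def IsLocal (L : LocalizationFunctor) (X : XMod) : Prop :=
  XModHom.IsIso (L.ell X)

/-- `L` is a regular-epi localization if every coaugmentation morphism is a
regular epimorphism. -/
def RegEpiLoc (L : LocalizationFunctor) : Prop :=
  ∀ X : XMod, XModHom.RegEpi (L.ell X)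

/-- A short exact sequence is `L`-flat if applying `L` yields a short exact sequence. -/
def LFlat (L : LocalizationFunctor) {N T Q : XMod} (κ : XModHom N T) (α : XModHom T Q) : Prop :=
  ShortExact (L.map κ) (L.map α)

end LocalizationFunctor
section Pullback

variable {T Q Q' : XMod} (α : XModHom T Q) (g : XModHom Q' Q)

/-- Level-1 part of the pullback `T ×_Q Q'`, computed componentwise. -/
def pbM : Subgroup (T.M × Q'.M) where
  carrier := {p | α.f1 p.1 = g.f1 p.2}
  one_mem' := by simp
  mul_mem' := by
    intro a b ha hb
    simp only [Set.mem_setOf_eq, Prod.fst_mul, Prod.snd_mul, map_mul] at *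
    rw [ha, hb]
  inv_mem' := by
    intro a ha
    simp only [Set.mem_setOf_eq, Prod.fst_inv, Prod.snd_inv, map_inv] at *
    rw [ha]

/-- Level-2 part of the pullback `T ×_Q Q'`, computed componentwise. -/
def pbG : Subgroup (T.G × Q'.G) where
  carrier := {p | α.f2 p.1 = g.f2 p.2}
  one_mem' := by simp
  mul_mem' := by
    intro a b ha hb
    simp only [Set.mem_setOf_eq, Prod.fst_mul, Prod.snd_mul, map_mul] at *
    rw [ha, hb]
  inv_mem' := by
    intro a ha
    simp only [Set.mem_setOf_eq, Prod.fst_inv, Prod.snd_inv, map_inv] at *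
    rw [ha]

theorem mem_pbM_iff (p : T.M × Q'.M) : p ∈ pbM α g ↔ α.f1 p.1 = g.f1 p.2 := Iff.rfl

theorem mem_pbG_iff (p : T.G × Q'.G) : p ∈ pbG α g ↔ α.f2 p.1 = g.f2 p.2 := Iff.rfl

theorem pb_act_mem {b : T.G × Q'.G} (hb : b ∈ pbG α g) {p : T.M × Q'.M}
    (hp : p ∈ pbM α g) : (T.act b.1 p.1, Q'.act b.2 p.2) ∈ pbM α g := by
  have hb' : α.f2 b.1 = g.f2 b.2 := hb
  have hp' : α.f1 p.1 = g.f1 p.2 := hp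
  show α.f1 (T.act b.1 p.1) = g.f1 (Q'.act b.2 p.2)
  rw [α.equiv, g.equiv, hb', hp']

theorem XMod.act_inv_act (X : XMod) (b : X.G) (t : X.M) :
    X.act b⁻¹ (X.act b t) = t := by
  rw [← MulAut.mul_apply, ← map_mul, inv_mul_cancel, map_one, MulAut.one_apply]

theorem XMod.act_act_inv (X : XMod) (b : X.G) (t : X.M) :
    X.act b (X.act b⁻¹ t) = t := by
  rw [← MulAut.mul_apply, ← map_mul, mul_inv_cancel, map_one, MulAut.one_apply]

/-- The action of an element of the pullback on the level-1 part, as a group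
automorphism. -/
def pbActEquiv (b : ↥(pbG α g)) : ↥(pbM α g) ≃* ↥(pbM α g) where
  toFun p := ⟨(T.act b.1.1 p.1.1, Q'.act b.1.2 p.1.2), pb_act_mem α g b.2 p.2⟩
  invFun p := ⟨(T.act b.1.1⁻¹ p.1.1, Q'.act b.1.2⁻¹ p.1.2),
    pb_act_mem α g ((pbG α g).inv_mem b.2) p.2⟩
  left_inv p := by
    apply Subtype.ext
    exact Prod.ext (T.act_inv_act _ _) (Q'.act_inv_act _ _)
  right_inv p := by
    apply Subtype.ext
    exact Prod.ext (T.act_act_inv _ _) (Q'.act_act_inv _ _)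
  map_mul' p q := by
    apply Subtype.ext
    exact Prod.ext (map_mul _ _ _) (map_mul _ _ _)

/-- The pullback `T ×_Q Q'` of `α : T → Q` along `g : Q' → Q`, computed
componentwise. -/
def pbXMod : XMod where
  M := ↥(pbM α g)
  G := ↥(pbG α g)
  act :=
    { toFun := pbActEquiv α g
      map_one' := by
        apply MulEquiv.ext
        intro p
        apply Subtype.ext
        apply Prod.ext
        · show T.act (1 : ↥(pbG α g)).1.1 p.1.1 = p.1.1
          simp
        · show Q'.act (1 : ↥(pbG α g)).1.2 p.1.2 = p.1.2
          simp
      map_mul' := by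
        intro b c
        apply MulEquiv.ext
        intro p
        apply Subtype.ext
        apply Prod.ext
        · show T.act (b * c).1.1 p.1.1 = T.act b.1.1 (T.act c.1.1 p.1.1)
          simp [map_mul]
        · show Q'.act (b * c).1.2 p.1.2 = Q'.act b.1.2 (Q'.act c.1.2 p.1.2)
          simp [map_mul] }
  d :=
    { toFun := fun p => ⟨(T.d p.1.1, Q'.d p.1.2), by
        have hp : α.f1 p.1.1 = g.f1 p.1.2 := p.2
        show α.f2 (T.d p.1.1) = g.f2 (Q'.d p.1.2)
        rw [← α.comm_d, ← g.comm_d, hp]⟩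
      map_one' := by
        apply Subtype.ext
        apply Prod.ext <;> simp
      map_mul' := by
        intro p q
        apply Subtype.ext
        apply Prod.ext <;> simp }
  act_d := by
    intro b p
    apply Subtype.ext
    apply Prod.ext
    · exact T.act_d _ _
    · exact Q'.act_d _ _
  peiffer := by
    intro p q
    apply Subtype.ext
    apply Prod.ext
    · exact T.peiffer _ _
    · exact Q'.peiffer _ _

/-- First projection of the pullback. -/
def pbFst : XModHom (pbXMod α g) T where
  f1 := (MonoidHom.fst T.M Q'.M).comp (pbM α g).subtype
  f2 := (MonoidHom.fst T.G Q'.G).comp (pbG α g).subtype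
  comm_d := fun _ => rfl
  equiv := fun _ _ => rfl

/-- Second projection of the pullback. -/
def pbSnd : XModHom (pbXMod α g) Q' where
  f1 := (MonoidHom.snd T.M Q'.M).comp (pbM α g).subtype
  f2 := (MonoidHom.snd T.G Q'.G).comp (pbG α g).subtype
  comm_d := fun _ => rfl
  equiv := fun _ _ => rfl

end Pullback
section PullbackMaps

variable {N T Q Q' : XMod}

/-- The induced morphism from the kernel `N` into the pullback `T ×_Q Q'`. -/
def pbIn (κ : XModHom N T) (α : XModHom T Q) (g : XModHom Q' Q)
    (h : XModHom.comp α κ = XModHom.triv N Q) : XModHom N (pbXMod α g) where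
  f1 :=
    { toFun := fun n => ⟨(κ.f1 n, 1), by
        show α.f1 (κ.f1 n) = g.f1 1
        have := congrArg XModHom.f1 h
        have h' : α.f1 (κ.f1 n) = 1 := DFunLike.congr_fun this n
        rw [h', map_one]⟩
      map_one' := by
        apply Subtype.ext
        apply Prod.ext <;> first | rfl | exact map_one _
      map_mul' := by
        intro a b
        apply Subtype.ext
        show (κ.f1 (a * b), (1 : Q'.M)) = (κ.f1 a, (1 : Q'.M)) * (κ.f1 b, (1 : Q'.M))
        simp [Prod.ext_iff, map_mul] }
  f2 :=
    { toFun := fun n => ⟨(κ.f2 n, 1), by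
        show α.f2 (κ.f2 n) = g.f2 1
        have := congrArg XModHom.f2 h
        have h' : α.f2 (κ.f2 n) = 1 := DFunLike.congr_fun this n
        rw [h', map_one]⟩
      map_one' := by
        apply Subtype.ext
        apply Prod.ext <;> first | rfl | exact map_one _
      map_mul' := by
        intro a b
        apply Subtype.ext
        show (κ.f2 (a * b), (1 : Q'.G)) = (κ.f2 a, (1 : Q'.G)) * (κ.f2 b, (1 : Q'.G))
        simp [Prod.ext_iff, map_mul] }
  comm_d := by
    intro n
    apply Subtype.ext
    apply Prod.ext
    · exact κ.comm_d n
    · show Q'.d (1 : Q'.M) = 1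
      simp
  equiv := by
    intro b n
    apply Subtype.ext
    apply Prod.ext
    · exact κ.equiv b n
    · show (1 : Q'.M) = Q'.act 1 1
      simp

/-- The induced morphism into the pullback `T ×_Q Q'` from an object mapping
trivially to `Q` through the second leg. -/
def pbInR (α : XModHom T Q) (g : XModHom Q' Q) {X : XMod} (u : XModHom X Q')
    (h : XModHom.comp g u = XModHom.triv X Q) : XModHom X (pbXMod α g) where
  f1 :=
    { toFun := fun n => ⟨(1, u.f1 n), by
        show α.f1 1 = g.f1 (u.f1 n)
        have := congrArg XModHom.f1 h
        have h' : g.f1 (u.f1 n) = 1 := DFunLike.congr_fun this n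
        rw [h', map_one]⟩
      map_one' := by
        apply Subtype.ext
        apply Prod.ext <;> first | rfl | exact map_one _
      map_mul' := by
        intro a b
        apply Subtype.ext
        show ((1 : T.M), u.f1 (a * b)) = ((1 : T.M), u.f1 a) * ((1 : T.M), u.f1 b)
        simp [Prod.ext_iff, map_mul] }
  f2 :=
    { toFun := fun n => ⟨(1, u.f2 n), by
        show α.f2 1 = g.f2 (u.f2 n)
        have := congrArg XModHom.f2 h
        have h' : g.f2 (u.f2 n) = 1 := DFunLike.congr_fun this n
        rw [h', map_one]⟩
      map_one' := by
        apply Subtype.ext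
        apply Prod.ext <;> first | rfl | exact map_one _
      map_mul' := by
        intro a b
        apply Subtype.ext
        show ((1 : T.G), u.f2 (a * b)) = ((1 : T.G), u.f2 a) * ((1 : T.G), u.f2 b)
        simp [Prod.ext_iff, map_mul] }
  comm_d := by
    intro n
    apply Subtype.ext
    apply Prod.ext
    · show T.d (1 : T.M) = 1
      simp
    · exact u.comm_d n
  equiv := by
    intro b n
    apply Subtype.ext
    apply Prod.ext
    · show (1 : T.M) = T.act 1 1
      simp
    · exact u.equiv b n

/-- The morphism of pullbacks `T ×_Q Q' → E ×_Q Q'` induced by `f : T → E`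
with `p ∘ f = α`. -/
def pbMapL {E : XMod} (α : XModHom T Q) (p : XModHom E Q) (g : XModHom Q' Q)
    (f : XModHom T E) (hpf : XModHom.comp p f = α) :
    XModHom (pbXMod α g) (pbXMod p g) where
  f1 :=
    { toFun := fun w => ⟨(f.f1 w.1.1, w.1.2), by
        show p.f1 (f.f1 w.1.1) = g.f1 w.1.2
        have h' : p.f1 (f.f1 w.1.1) = α.f1 w.1.1 :=
          DFunLike.congr_fun (congrArg XModHom.f1 hpf) w.1.1
        rw [h']
        exact w.2⟩
      map_one' := by
        apply Subtype.ext
        apply Prod.ext <;> first | rfl | exact map_one _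
      map_mul' := by
        intro a b
        apply Subtype.ext
        apply Prod.ext
        · exact map_mul f.f1 a.1.1 b.1.1
        · rfl }
  f2 :=
    { toFun := fun w => ⟨(f.f2 w.1.1, w.1.2), by
        show p.f2 (f.f2 w.1.1) = g.f2 w.1.2
        have h' : p.f2 (f.f2 w.1.1) = α.f2 w.1.1 :=
          DFunLike.congr_fun (congrArg XModHom.f2 hpf) w.1.1
        rw [h']
        exact w.2⟩
      map_one' := by
        apply Subtype.ext
        apply Prod.ext <;> first | rfl | exact map_one _
      map_mul' := by
        intro a b
        apply Subtype.ext
        apply Prod.ext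
        · exact map_mul f.f2 a.1.1 b.1.1
        · rfl }
  comm_d := by
    intro w
    apply Subtype.ext
    apply Prod.ext
    · exact f.comm_d _
    · rfl
  equiv := by
    intro b w
    apply Subtype.ext
    apply Prod.ext
    · exact f.equiv _ _
    · rfl

end PullbackMaps

/-- A commuting square is a pullback square (categorical definition). -/
def IsPullbackSquare {P X Y Z : XMod} (p1 : XModHom P X) (p2 : XModHom P Y)
    (f : XModHom X Z) (h : XModHom Y Z) : Prop :=
  XModHom.comp f p1 = XModHom.comp h p2 ∧
    ∀ (W : XMod) (u : XModHom W X) (v : XModHom W Y),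
      XModHom.comp f u = XModHom.comp h v →
        ∃! w : XModHom W P, XModHom.comp p1 w = u ∧ XModHom.comp p2 w = v

namespace LocalizationFunctor

/-- `L` is admissible for the class of regular epimorphisms: applying `L` to the
pullback of a regular epimorphism `α : LT → LQ` along the coaugmentation
`ℓ^Q : Q → LQ` yields again a pullback square. -/
def Admissible (L : LocalizationFunctor) : Prop :=
  ∀ (T Q : XMod) (α : XModHom (L.obj T) (L.obj Q)), XModHom.RegEpi α →
    IsPullbackSquare (L.map (pbFst α (L.ell Q))) (L.map (pbSnd α (L.ell Q)))
      (L.map α) (L.map (L.ell Q))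

/-- `L` is conditionally flat: the pullback of any `L`-flat short exact sequence
along any morphism is again `L`-flat. -/
def ConditionallyFlat (L : LocalizationFunctor) : Prop :=
  ∀ (N T Q : XMod) (κ : XModHom N T) (α : XModHom T Q) (hse : ShortExact κ α),
    L.LFlat κ α →
      ∀ (Q' : XMod) (g : XModHom Q' Q),
        L.LFlat (pbIn κ α g hse.1.1) (pbSnd α g)

/-- A short exact sequence `1 → N → T → Q → 1` admits a fiberwise localization:
there is a short exact sequence `1 → LN → E → Q → 1` together with an
`L`-equivalence `T → E` compatible with the coaugmentation of `N`. -/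
def AdmitsFiberwise (L : LocalizationFunctor) {N T Q : XMod} (κ : XModHom N T)
    (α : XModHom T Q) : Prop :=
  ∃ (E : XMod) (j : XModHom (L.obj N) E) (p : XModHom E Q) (e : XModHom T E),
    ShortExact j p ∧ XModHom.IsIso (L.map e) ∧
      XModHom.comp e κ = XModHom.comp j (L.ell N) ∧ XModHom.comp p e = α

end LocalizationFunctor
section Kernel

variable {N T : XMod} (f : XModHom N T)

theorem ker_act_mem {b : N.G} (hb : b ∈ f.f2.ker) {n : N.M} (hn : n ∈ f.f1.ker) :
    N.act b n ∈ f.f1.ker := by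
  have hb' : f.f2 b = 1 := hb
  have hn' : f.f1 n = 1 := hn
  show f.f1 (N.act b n) = 1
  rw [f.equiv, hb', hn', map_one]

/-- The automorphism of `ker f.f1` induced by an element of `ker f.f2`. -/
def kerActEquiv (b : ↥f.f2.ker) : ↥f.f1.ker ≃* ↥f.f1.ker where
  toFun n := ⟨N.act b.1 n.1, ker_act_mem f b.2 n.2⟩
  invFun n := ⟨N.act b.1⁻¹ n.1, ker_act_mem f (f.f2.ker.inv_mem b.2) n.2⟩
  left_inv n := Subtype.ext (N.act_inv_act _ _)
  right_inv n := Subtype.ext (N.act_act_inv _ _)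
  map_mul' n m := Subtype.ext (map_mul _ _ _)

/-- The kernel of a morphism of crossed modules, computed componentwise. -/
def kerXMod : XMod where
  M := ↥f.f1.ker
  G := ↥f.f2.ker
  act :=
    { toFun := kerActEquiv f
      map_one' := by
        apply MulEquiv.ext
        intro n
        apply Subtype.ext
        show N.act (1 : ↥f.f2.ker).1 n.1 = n.1
        simp
      map_mul' := by
        intro b c
        apply MulEquiv.ext
        intro n
        apply Subtype.ext
        show N.act (b * c).1 n.1 = N.act b.1 (N.act c.1 n.1)
        simp [map_mul] }
  d :=
    { toFun := fun n => ⟨N.d n.1, by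
        have hn : f.f1 n.1 = 1 := n.2
        show f.f2 (N.d n.1) = 1
        rw [← f.comm_d, hn, map_one]⟩
      map_one' := by
        apply Subtype.ext
        simp
      map_mul' := by
        intro a b
        apply Subtype.ext
        show N.d (a * b).1 = N.d a.1 * N.d b.1
        simp }
  act_d := by
    intro b n
    apply Subtype.ext
    exact N.act_d _ _
  peiffer := by
    intro n m
    apply Subtype.ext
    exact N.peiffer _ _

/-- The inclusion of the kernel. -/
def kerIncl : XModHom (kerXMod f) N where
  f1 := f.f1.ker.subtype
  f2 := f.f2.ker.subtype
  comm_d := fun _ => rfl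
  equiv := fun _ _ => rfl

end Kernel

/-- A crossed module is trivial if both underlying groups are trivial. -/
def XMod.IsTrivial (X : XMod) : Prop :=
  (∀ m : X.M, m = 1) ∧ ∀ b : X.G, b = 1

/-- `X` is `A`-null if the only morphism of crossed modules `A → X` is the
trivial one. -/
def ANull (A X : XMod) : Prop :=
  ∀ φ : XModHom A X, φ = XModHom.triv A X

/-- `X` is `f`-local if precomposition with `f` is a bijection on morphisms
into `X`. -/
def FLocal {B C : XMod} (f : XModHom B C) (X : XMod) : Prop :=
  Function.Bijective fun φ : XModHom C X => XModHom.comp φ f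

/-- The subgroup `[N₂, N₁]` of `N₁` generated by the elements `ᵇt·t⁻¹`. -/
def actCommutator (N : XMod) : Subgroup N.M :=
  Subgroup.closure {x | ∃ (b : N.G) (t : N.M), x = N.act b t * t⁻¹}

section NormalClosure

variable {A W : XMod} (φ : XModHom A W)

/-- The level-2 part of the normal closure of the image of `φ`:
the normal closure of `φ₂(A₂)` in `W₂`. -/
def ncl2 : Subgroup W.G :=
  Subgroup.normalClosure (Set.range φ.f2)

/-- The level-1 part of the normal closure of the image of `φ`:
the subgroup `φ₁(A₁)^{W₂}·[φ₂(A₂)^{W₂}, W₁]` of `W₁`. -/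
def ncl1 : Subgroup W.M :=
  Subgroup.closure
    ({x | ∃ (b : W.G) (m : A.M), x = W.act b (φ.f1 m)} ∪
      {x | ∃ s ∈ ncl2 φ, ∃ w : W.M, x = W.act s w * w⁻¹})

end NormalClosure

/-! Let `P` be the pullback of `α : LT → LQ` along `ℓ^Q`, with projection `p₁ : P → LT`.
Since `ℓ^Q` is surjective, so is `p₁`, and the kernel of `p₁` is the image of `ker ℓ^Q`,
which dies in `LP` because `L (ker ℓ^Q)` is trivial. Comparing `ℓ^P` with the isomorphism
`ℓ^{LT}` through naturality, `L p₁` is an isomorphism. A commutative square in which two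
opposite sides are isomorphisms is a pullback, and `L ℓ^Q` is an isomorphism by idempotence. -/

theorem MonoidHom.bijective_of_comm_sq {X X' Y Y' : Type*} [Group X] [Group X']
    [MulOneClass Y] [MulOneClass Y'] {f : X →* Y} {ℓX : X →* X'} {ℓY : Y →* Y'} {F : X' →* Y'}
    (hsq : ∀ x, ℓY (f x) = F (ℓX x)) (hℓX : Function.Surjective ℓX)
    (hℓY : Function.Bijective ℓY) (hf : Function.Surjective f) (hker : f.ker ≤ ℓX.ker) :
    Function.Bijective F := by
  refine ⟨(injective_iff_map_eq_one F).2 fun z hz => ?_, fun y => ?_⟩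
  · obtain ⟨x, rfl⟩ := hℓX z
    exact hker (hℓY.1 (by rw [hsq, hz, map_one]))
  · obtain ⟨y, rfl⟩ := hℓY.2 y
    obtain ⟨x, rfl⟩ := hf y
    exact ⟨ℓX x, (hsq x).symm⟩

namespace XModHom

variable {A B C : XMod}

theorem comp_assoc {D : XMod} (h : XModHom C D) (g : XModHom B C) (f : XModHom A B) :
    comp (comp h g) f = comp h (comp g f) := rfl

theorem id_comp (f : XModHom A B) : comp (id B) f = f := rfl

theorem isIso_of_bijective (f : XModHom A B) (h1 : Function.Bijective f.f1)
    (h2 : Function.Bijective f.f2) : f.IsIso := by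
  let e1 := MulEquiv.ofBijective f.f1 h1
  let e2 := MulEquiv.ofBijective f.f2 h2
  refine ⟨⟨e1.symm.toMonoidHom, e2.symm.toMonoidHom, fun n => h2.1 ?_, fun b n => h1.1 ?_⟩,
    ext (MonoidHom.ext e1.symm_apply_apply) (MonoidHom.ext e2.symm_apply_apply),
    ext (MonoidHom.ext e1.apply_symm_apply) (MonoidHom.ext e2.apply_symm_apply)⟩
  · change f.f2 (A.d (e1.symm n)) = e2 (e2.symm (B.d n))
    rw [← f.comm_d]
    change B.d (e1 (e1.symm n)) = _
    simp only [MulEquiv.apply_symm_apply]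
  · change e1 (e1.symm (B.act b n)) = f.f1 (A.act (e2.symm b) (e1.symm n))
    rw [f.equiv]
    change _ = B.act (e2 (e2.symm b)) (e1 (e1.symm n))
    simp only [MulEquiv.apply_symm_apply]

theorem IsIso.bijective_f1 {f : XModHom A B} (hf : f.IsIso) : Function.Bijective f.f1 := by
  obtain ⟨g, hgf, hfg⟩ := hf
  exact ⟨Function.LeftInverse.injective (g := g.f1) (DFunLike.congr_fun (congrArg f1 hgf)),
    Function.RightInverse.surjective (g := g.f1) (DFunLike.congr_fun (congrArg f1 hfg))⟩

theorem IsIso.bijective_f2 {f : XModHom A B} (hf : f.IsIso) : Function.Bijective f.f2 := by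
  obtain ⟨g, hgf, hfg⟩ := hf
  exact ⟨Function.LeftInverse.injective (g := g.f2) (DFunLike.congr_fun (congrArg f2 hgf)),
    Function.RightInverse.surjective (g := g.f2) (DFunLike.congr_fun (congrArg f2 hfg))⟩

theorem IsIso.cancel_left {h : XModHom B C} (hh : h.IsIso) {a b : XModHom A B}
    (hab : comp h a = comp h b) : a = b := by
  obtain ⟨s, hs, -⟩ := hh
  calc a = comp (comp s h) a := by rw [hs, id_comp]
    _ = comp (comp s h) b := by rw [comp_assoc, hab, ← comp_assoc]
    _ = b := by rw [hs, id_comp]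

end XModHom

open XModHom

theorem isPullbackSquare_of_isIso {P X Y Z : XMod} {p1 : XModHom P X} {p2 : XModHom P Y}
    {f : XModHom X Z} {h : XModHom Y Z} (hsq : comp f p1 = comp h p2) (hp1 : p1.IsIso)
    (hh : h.IsIso) : IsPullbackSquare p1 p2 f h := by
  obtain ⟨r, hr1, hr2⟩ := hp1
  refine ⟨hsq, fun W u v huv => ⟨comp r u, ⟨?_, ?_⟩, ?_⟩⟩
  · rw [← comp_assoc, hr2, id_comp]
  · apply hh.cancel_left
    rw [← comp_assoc, ← hsq, comp_assoc, ← comp_assoc p1, hr2, id_comp, huv]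
  · rintro w ⟨hw, -⟩
    rw [← hw, ← comp_assoc, hr1, id_comp]

theorem comp_kerIncl {N T : XMod} (f : XModHom N T) :
    comp f (kerIncl f) = triv (kerXMod f) T :=
  ext (MonoidHom.ext fun n => n.2) (MonoidHom.ext fun n => n.2)

section Pullback

variable {T Q Q' : XMod} (α : XModHom T Q) (g : XModHom Q' Q)

theorem comp_pbFst : comp α (pbFst α g) = comp g (pbSnd α g) :=
  ext (MonoidHom.ext fun w => w.2) (MonoidHom.ext fun w => w.2)

theorem pbFst_regEpi (hg : RegEpi g) : RegEpi (pbFst α g) := by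
  refine ⟨fun t => ?_, fun t => ?_⟩
  · obtain ⟨q, hq⟩ := hg.1 (α.f1 t)
    exact ⟨⟨(t, q), hq.symm⟩, rfl⟩
  · obtain ⟨q, hq⟩ := hg.2 (α.f2 t)
    exact ⟨⟨(t, q), hq.symm⟩, rfl⟩

end Pullback

namespace LocalizationFunctor

variable (L : LocalizationFunctor)

theorem isIso_map_of_ker_le {X Y : XMod} {f : XModHom X Y} (hX : RegEpi (L.ell X))
    (hY : L.IsLocal Y) (hf : RegEpi f) (h1 : f.f1.ker ≤ (L.ell X).f1.ker)
    (h2 : f.f2.ker ≤ (L.ell X).f2.ker) : (L.map f).IsIso :=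
  isIso_of_bijective _
    (MonoidHom.bijective_of_comm_sq (DFunLike.congr_fun (congrArg f1 (L.natural f)))
      hX.1 hY.bijective_f1 hf.1 h1)
    (MonoidHom.bijective_of_comm_sq (DFunLike.congr_fun (congrArg f2 (L.natural f)))
      hX.2 hY.bijective_f2 hf.2 h2)

variable {L}

theorem ell_f1_eq_one_of_isTrivial {K X : XMod} (hK : (L.obj K).IsTrivial) (u : XModHom K X)
    (k : K.M) : (L.ell X).f1 (u.f1 k) = 1 := by
  change (comp (L.ell X) u).f1 k = 1
  rw [L.natural u]
  exact (congrArg (L.map u).f1 (hK.1 _)).trans (map_one _)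

theorem ell_f2_eq_one_of_isTrivial {K X : XMod} (hK : (L.obj K).IsTrivial) (u : XModHom K X)
    (k : K.G) : (L.ell X).f2 (u.f2 k) = 1 := by
  change (comp (L.ell X) u).f2 k = 1
  rw [L.natural u]
  exact (congrArg (L.map u).f2 (hK.2 _)).trans (map_one _)

section Pullback

variable {T Q Q' : XMod} (α : XModHom T Q) (g : XModHom Q' Q)

theorem ker_pbFst_f1_le (hK : (L.obj (kerXMod g)).IsTrivial) :
    (pbFst α g).f1.ker ≤ (L.ell (pbXMod α g)).f1.ker := by
  intro x (hx : x.1.1 = 1)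
  have hq : g.f1 x.1.2 = 1 := by rw [← (mem_pbM_iff α g _).1 x.2, hx, map_one]
  have hx' : x = (pbInR α g (kerIncl g) (comp_kerIncl g)).f1 ⟨x.1.2, hq⟩ :=
    Subtype.ext (Prod.ext hx rfl)
  rw [MonoidHom.mem_ker, hx']
  exact ell_f1_eq_one_of_isTrivial hK _ _

theorem ker_pbFst_f2_le (hK : (L.obj (kerXMod g)).IsTrivial) :
    (pbFst α g).f2.ker ≤ (L.ell (pbXMod α g)).f2.ker := by
  intro x (hx : x.1.1 = 1)
  have hq : g.f2 x.1.2 = 1 := by rw [← (mem_pbG_iff α g _).1 x.2, hx, map_one]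
  have hx' : x = (pbInR α g (kerIncl g) (comp_kerIncl g)).f2 ⟨x.1.2, hq⟩ :=
    Subtype.ext (Prod.ext hx rfl)
  rw [MonoidHom.mem_ker, hx']
  exact ell_f2_eq_one_of_isTrivial hK _ _

theorem isIso_map_pbFst (hL : L.RegEpiLoc) (hT : L.IsLocal T) (hg : RegEpi g)
    (hK : (L.obj (kerXMod g)).IsTrivial) : (L.map (pbFst α g)).IsIso :=
  L.isIso_map_of_ker_le (hL _) hT (pbFst_regEpi α g hg) (ker_pbFst_f1_le α g hK)
    (ker_pbFst_f2_le α g hK)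

end Pullback

end LocalizationFunctor

/-- A regular-epi localization functor `L` on `XMod` such
that the kernel of every coaugmentation `ℓ^M : M → LM` is `L`-acyclic is
admissible for the class of regular epimorphisms. -/
theorem acyclic_kernels_admissible (L : LocalizationFunctor) (hL : L.RegEpiLoc)
    (hacy : ∀ M : XMod, (L.obj (kerXMod (L.ell M))).IsTrivial) :
    L.Admissible := by
  intro T Q α _
  refine isPullbackSquare_of_isIso ?_
    (L.isIso_map_pbFst α (L.ell Q) hL (L.iso_ell_obj T) (hL Q) (hacy Q)) (L.iso_map_ell Q)
  rw [← L.map_comp, ← L.map_comp, comp_pbFst]
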